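/- arXiv:1506.04850 — 6 statements merged into one kernel-verified Lean document; each statement's English description precedes it below -/
import Mathlib

section
/- For the lazy simple random walk on the cycle C_n with n vertices, the total variation mixing time satisfies t_mix(C_n) ≤ n², i.e., for t = n², max_x ‖P^t(x,·) − π‖_TV ≤ 1/4. -/
/-!
The walk is a convolution on `ZMod n`, so the characters `y ↦ stdAddChar (-(y * j))` diagonalise
it, with eigenvalues `(1 + cos (2π a / n)) / 2 ≤ 1 - 4 a² / n²`, where `a = j.valMinAbs` lies in
`(-n/2, n/2]`. Fourier inversion bounds every entry of `P^t - π` by `1/n` times the sum of the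
`t`-th powers of the nontrivial eigenvalues. For `t = n²` that power is at most
`e^{-4 a²} ≤ 9^{-|a|}`, and summing over `a ≠ 0` gives `2 · (1/9) / (1 - 1/9) = 1/4`.
-/

open Finset Matrix ZMod Real

theorem Matrix.pow_mulVec_of_mulVec_eq_smul {ι R : Type*} [Fintype ι] [DecidableEq ι]
    [CommSemiring R] {A : Matrix ι ι R} {v : ι → R} {c : R} (h : A *ᵥ v = c • v) (t : ℕ) :
    (A ^ t) *ᵥ v = c ^ t • v := by
  induction t with
  | zero => simp
  | succ t ih => rw [pow_succ, ← mulVec_mulVec, h, mulVec_smul, ih, smul_smul, pow_succ']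

namespace ZMod

variable {n : ℕ} [NeZero n]

theorem norm_stdAddChar (j : ZMod n) : ‖stdAddChar j‖ = 1 := by
  rw [stdAddChar_apply, Circle.norm_coe]

theorem mulVec_stdAddChar_eq_dft_smul {P : Matrix (ZMod n) (ZMod n) ℂ} {w : ZMod n → ℂ}
    (hP : ∀ x y, P x y = w (y - x)) (j : ZMod n) :
    P *ᵥ (fun y ↦ stdAddChar (-(y * j))) = 𝓕 w j • fun y ↦ stdAddChar (-(y * j)) := by
  ext x
  simp only [mulVec, dotProduct, hP, dft_apply, Pi.smul_apply, smul_eq_mul, sum_mul]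
  refine Fintype.sum_equiv (Equiv.subRight x) _ _ fun y ↦ ?_
  rw [Equiv.subRight_apply, mul_right_comm, ← AddChar.map_add_eq_mul, mul_comm]
  ring_nf

theorem pow_apply_eq_sum_dft_pow {P : Matrix (ZMod n) (ZMod n) ℂ} {w : ZMod n → ℂ}
    (hP : ∀ x y, P x y = w (y - x)) (t : ℕ) (x y : ZMod n) :
    (P ^ t) x y = (n : ℂ)⁻¹ * ∑ j, 𝓕 w j ^ t * stdAddChar (j * (y - x)) := by
  have hrow : 𝓕 ((P ^ t) x) = fun j ↦ 𝓕 w j ^ t * stdAddChar (-(x * j)) := by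
    ext j
    have := congrFun (pow_mulVec_of_mulVec_eq_smul (mulVec_stdAddChar_eq_dft_smul hP j) t) x
    simpa [mulVec, dotProduct, dft_apply, mul_comm] using this
  rw [← dft.symm_apply_apply ((P ^ t) x), hrow, invDFT_apply, smul_eq_mul]
  congr 1
  refine sum_congr rfl fun j _ ↦ ?_
  rw [smul_eq_mul, mul_left_comm, ← AddChar.map_add_eq_mul]
  ring_nf

theorem abs_pow_apply_sub_inv_le {P : Matrix (ZMod n) (ZMod n) ℝ} {w : ZMod n → ℝ}
    (hP : ∀ x y, P x y = w (y - x)) (hw : ∑ d, w d = 1) (t : ℕ) (x y : ZMod n) :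
    |(P ^ t) x y - (n : ℝ)⁻¹| ≤ (n : ℝ)⁻¹ * ∑ j ∈ univ.erase 0, ‖𝓕 (fun d ↦ (w d : ℂ)) j‖ ^ t := by
  set W : ZMod n → ℂ := fun d ↦ (w d : ℂ)
  have hPC : ((P ^ t) x y : ℂ) = (n : ℂ)⁻¹ * ∑ j, 𝓕 W j ^ t * stdAddChar (j * (y - x)) := by
    rw [show ((P ^ t) x y : ℂ) = (P.map Complex.ofRealHom ^ t) x y by rw [← Matrix.map_pow]; rfl]
    exact pow_apply_eq_sum_dft_pow (fun x y ↦ by simp [W, hP]) t x y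
  have hW0 : 𝓕 W 0 = 1 := by simp [dft_apply_zero, W, ← Complex.ofReal_sum, hw]
  have hsplit : ((P ^ t) x y - (n : ℝ)⁻¹ : ℝ) =
      (n : ℂ)⁻¹ * ∑ j ∈ univ.erase 0, 𝓕 W j ^ t * stdAddChar (j * (y - x)) := by
    push_cast
    rw [hPC, ← add_sum_erase _ _ (mem_univ 0), hW0]
    simp [mul_add]
  rw [← Real.norm_eq_abs, ← Complex.norm_real, hsplit, norm_mul, norm_inv, Complex.norm_natCast]
  gcongr
  refine (norm_sum_le _ _).trans (sum_le_sum fun j _ ↦ ?_)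
  rw [norm_mul, norm_pow, norm_stdAddChar, mul_one]

theorem sum_abs_pow_apply_sub_inv_le {P : Matrix (ZMod n) (ZMod n) ℝ} {w : ZMod n → ℝ}
    (hP : ∀ x y, P x y = w (y - x)) (hw : ∑ d, w d = 1) (t : ℕ) (x : ZMod n) :
    ∑ y, |(P ^ t) x y - (n : ℝ)⁻¹| ≤ ∑ j ∈ univ.erase 0, ‖𝓕 (fun d ↦ (w d : ℂ)) j‖ ^ t := by
  have hn : (n : ℝ) ≠ 0 := Nat.cast_ne_zero.mpr (NeZero.ne n)
  calc ∑ y, |(P ^ t) x y - (n : ℝ)⁻¹|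
      ≤ ∑ _y : ZMod n, (n : ℝ)⁻¹ * ∑ j ∈ univ.erase 0, ‖𝓕 (fun d ↦ (w d : ℂ)) j‖ ^ t :=
        sum_le_sum fun y _ ↦ abs_pow_apply_sub_inv_le hP hw t x y
    _ = _ := by rw [sum_const, card_univ, ZMod.card, nsmul_eq_mul, mul_inv_cancel_left₀ hn]

theorem two_mul_natAbs_valMinAbs_le (j : ZMod n) : 2 * j.valMinAbs.natAbs ≤ n := by
  have := natAbs_valMinAbs_le j
  omega

theorem sum_erase_zero_pow_natAbs_valMinAbs_le {r : ℝ} (hr₀ : 0 ≤ r) (hr₁ : r < 1) :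
    ∑ j ∈ univ.erase (0 : ZMod n), r ^ j.valMinAbs.natAbs ≤ 2 * r / (1 - r) := by
  have hval : ∑ j : ZMod n, r ^ j.val ≤ 1 / (1 - r) := by
    have : ∑ j : ZMod n, r ^ j.val = ∑ k ∈ range n, r ^ k := by
      obtain ⟨k, rfl⟩ := Nat.exists_eq_succ_of_ne_zero (NeZero.ne n)
      exact Fin.sum_univ_eq_sum_range (fun i ↦ r ^ i) _
    simpa [this] using geom_sum_Ico_le_of_lt_one (m := 0) (n := n) hr₀ hr₁
  have hneg : ∑ j : ZMod n, r ^ (-j).val = ∑ j : ZMod n, r ^ j.val :=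
    Fintype.sum_equiv (Equiv.neg _) _ _ fun _ ↦ rfl
  have hmin (j : ZMod n) (hj : j ≠ 0) : r ^ j.valMinAbs.natAbs ≤ r ^ j.val + r ^ (-j).val := by
    rw [valMinAbs_natAbs_eq_min, neg_val, if_neg hj]
    rcases min_choice j.val (n - j.val) with h | h <;> rw [h]
    · exact le_add_of_nonneg_right (pow_nonneg hr₀ _)
    · exact le_add_of_nonneg_left (pow_nonneg hr₀ _)
  have h₁ : 0 < 1 - r := by linarith
  calc ∑ j ∈ univ.erase (0 : ZMod n), r ^ j.valMinAbs.natAbs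
      ≤ ∑ j ∈ univ.erase (0 : ZMod n), (r ^ j.val + r ^ (-j).val) :=
        sum_le_sum fun j hj ↦ hmin j (ne_of_mem_erase hj)
    _ = 2 * ∑ j : ZMod n, r ^ j.val - 2 := by
        rw [sum_erase_eq_sub (mem_univ 0), sum_add_distrib, hneg]
        simp only [val_zero, pow_zero, neg_zero]
        ring
    _ ≤ 2 * r / (1 - r) := by
        rw [le_div_iff₀ h₁]
        rw [le_div_iff₀ h₁] at hval
        linarith

end ZMod

section LazyWalk

variable {n : ℕ} [NeZero n]

noncomputable def lazyStep (d : ZMod n) : ℝ :=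
  1 / 2 * (if d = 0 then 1 else 0) + 1 / 4 * (if d = 1 then 1 else 0)
    + 1 / 4 * (if d = -1 then 1 else 0)

theorem sum_lazyStep : ∑ d : ZMod n, lazyStep d = 1 := by
  simp only [lazyStep, sum_add_distrib, ← mul_sum, sum_ite_eq', mem_univ, if_true]
  norm_num

theorem dft_lazyStep (j : ZMod n) :
    𝓕 (fun d ↦ (lazyStep d : ℂ)) j = ((1 + cos (2 * π * j.valMinAbs / n)) / 2 : ℝ) := by
  have hsum : 𝓕 (fun d ↦ (lazyStep d : ℂ)) j = 1 / 2 + (stdAddChar j + stdAddChar (-j)) / 4 := by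
    simp only [dft_apply, lazyStep, smul_eq_mul, Complex.ofReal_add, apply_ite Complex.ofReal,
      Complex.ofReal_zero, mul_one, mul_zero, mul_add, mul_ite, sum_add_distrib, sum_ite_eq',
      mem_univ, if_true, zero_mul, one_mul, neg_zero, neg_mul, neg_neg, AddChar.map_zero_eq_one]
    push_cast
    ring
  rw [hsum, ← coe_valMinAbs j, ← Int.cast_neg, stdAddChar_coe, stdAddChar_coe]
  push_cast
  rw [Complex.cos]
  ring_nf

theorem norm_dft_lazyStep_le (j : ZMod n) :
    ‖𝓕 (fun d ↦ (lazyStep d : ℂ)) j‖ ≤ 1 - 4 * (j.valMinAbs.natAbs : ℝ) ^ 2 / n ^ 2 := by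
  set m := j.valMinAbs.natAbs
  have hn : (0 : ℝ) < n := by exact_mod_cast Nat.pos_of_ne_zero (NeZero.ne n)
  have hcos : cos (2 * π * j.valMinAbs / n) = cos (2 * π * m / n) := by
    rw [← cos_abs, abs_div, abs_mul, Nat.abs_cast, abs_of_pos two_pi_pos, Nat.cast_natAbs,
      Int.cast_abs]
  have hx : |2 * π * m / n| ≤ π := by
    have hm : 2 * (m : ℝ) ≤ n := by exact_mod_cast two_mul_natAbs_valMinAbs_le j
    rw [abs_of_nonneg (by positivity), div_le_iff₀ hn]
    nlinarith [pi_pos]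
  have hnonneg : 0 ≤ (1 + cos (2 * π * m / n)) / 2 := by
    linarith [neg_one_le_cos (2 * π * m / n)]
  rw [dft_lazyStep, Complex.norm_real, hcos, norm_of_nonneg hnonneg]
  have hcos_le := cos_le_one_sub_mul_cos_sq hx
  have hπ := pi_pos.ne'
  field_simp at hcos_le ⊢
  nlinarith

theorem norm_dft_lazyStep_pow_le (j : ZMod n) :
    ‖𝓕 (fun d ↦ (lazyStep d : ℂ)) j‖ ^ (n ^ 2) ≤ (1 / 9) ^ j.valMinAbs.natAbs := by
  set m := j.valMinAbs.natAbs
  have hm : 2 * (m : ℝ) ≤ n := by exact_mod_cast two_mul_natAbs_valMinAbs_le j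
  have hexp : exp (-4) ≤ 1 / 9 := by
    rw [exp_neg, one_div]
    gcongr
    linarith [quadratic_le_exp_of_nonneg (x := 4) (by norm_num)]
  calc ‖𝓕 (fun d ↦ (lazyStep d : ℂ)) j‖ ^ (n ^ 2)
      ≤ (1 - 4 * m ^ 2 / ((n ^ 2 : ℕ) : ℝ)) ^ (n ^ 2) := by
        gcongr
        exact_mod_cast norm_dft_lazyStep_le j
    _ ≤ exp (-(4 * m ^ 2)) := one_sub_div_pow_le_exp_neg (by push_cast; nlinarith)
    _ ≤ exp (-4) ^ m := by
        rw [← exp_nat_mul, exp_le_exp]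
        have : (m : ℝ) ≤ m ^ 2 := by exact_mod_cast Nat.le_self_pow two_ne_zero m
        linarith
    _ ≤ (1 / 9) ^ m := pow_le_pow_left₀ (exp_pos _).le hexp _

end LazyWalk

/-- For lazy simple random walk on the cycle `C_n`, at time `t = n²` the total variation
distance to the uniform stationary distribution is at most `1/4` from every starting state;
in particular `t_mix(C_n) ≤ n²`. -/
theorem cycle_mixing (n : ℕ) [NeZero n]
    (P : Matrix (ZMod n) (ZMod n) ℝ)
    (hP : ∀ x y, P x y = (1 / 2) * (if y = x then 1 else 0)
        + (1 / 4) * (if y = x + 1 then 1 else 0) + (1 / 4) * (if y = x - 1 then 1 else 0)) :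
    ∀ x : ZMod n,
      (Finset.univ.sup' ⟨∅, Finset.mem_univ _⟩
        fun A : Finset (ZMod n) =>
          |∑ y ∈ A, (P ^ (n ^ 2)) x y - ∑ y ∈ A, ((n : ℝ))⁻¹|) ≤ 1 / 4 := by
  intro x
  have hstep (x y : ZMod n) : P x y = lazyStep (y - x) := by
    simp only [hP, lazyStep, sub_eq_iff_eq_add', add_zero, ← sub_eq_add_neg]
  refine sup'_le _ _ fun A _ ↦ ?_
  calc |∑ y ∈ A, (P ^ (n ^ 2)) x y - ∑ y ∈ A, (n : ℝ)⁻¹|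
      ≤ ∑ y, |(P ^ (n ^ 2)) x y - (n : ℝ)⁻¹| := by
        rw [← sum_sub_distrib]
        exact (abs_sum_le_sum_abs _ _).trans
          (sum_le_sum_of_subset_of_nonneg (subset_univ A) fun _ _ _ ↦ abs_nonneg _)
    _ ≤ ∑ j ∈ univ.erase 0, ‖𝓕 (fun d ↦ (lazyStep d : ℂ)) j‖ ^ (n ^ 2) :=
        sum_abs_pow_apply_sub_inv_le hstep sum_lazyStep _ x
    _ ≤ ∑ j ∈ univ.erase 0, (1 / 9 : ℝ) ^ j.valMinAbs.natAbs :=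
        sum_le_sum fun j _ ↦ norm_dft_lazyStep_pow_le j
    _ ≤ 2 * (1 / 9) / (1 - 1 / 9) :=
        sum_erase_zero_pow_natAbs_valMinAbs_le (by norm_num) (by norm_num)
    _ = 1 / 4 := by norm_num
end

section
/- For lazy random walk on the d-dimensional torus Z_n^d (d ≥ 2), the total variation mixing time satisfies t_mix(Z_n^d) ≤ 3 d (log d) n². -/
/-!
The walk is the convolution walk on `G = (ℤ/nℤ)^d` with step law `μ`, so the characters
`z ↦ e(k ⬝ᵥ z / n)` diagonalise it: `P^t x y = |G|⁻¹ ∑_k λ_k^t e(k ⬝ᵥ (x - y) / n)` with real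
eigenvalues `λ_k = 1 - (2d)⁻¹ ∑_i (1 - cos (2π k_i / n))` and `λ_0 = 1`. Hence the total variation
distance to uniform is at most `∑_{k ≠ 0} λ_k^t` (Diaconis' upper bound lemma). Using
`λ ≤ exp (λ - 1)` and `1 - cos (2πx) ≥ 8x²` for `|x| ≤ 1/2`, once `t ≥ 3 d log d n² - 1` a
coordinate `k_i = j`, represented in `(-n/2, n/2]`, contributes a factor at most `d^(-10|j|)`, so
the sum is at most `((1 + d⁻¹⁰) / (1 - d⁻¹⁰))^d - 1 ≤ 1/4`.
-/

open Finset Real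

lemma Function.update_add_eq_add_single {ι G : Type*} [DecidableEq ι] [AddZeroClass G]
    (x : ι → G) (i : ι) (c : G) : Function.update x i (x i + c) = x + Pi.single i c := by
  ext j
  by_cases h : j = i
  · subst h; simp
  · simp [h]

lemma ZMod.sum_val_eq_sum_range {M : Type*} [AddCommMonoid M] {n : ℕ} [NeZero n] (f : ℕ → M) :
    ∑ a : ZMod n, f a.val = ∑ v ∈ range n, f v := by
  obtain ⟨m, rfl⟩ := Nat.exists_eq_succ_of_ne_zero (NeZero.ne n)
  exact Fin.sum_univ_eq_sum_range f _

lemma ZMod.sum_pow_natAbs_valMinAbs_le {n : ℕ} [NeZero n] {ρ : ℝ} (hρ₀ : 0 ≤ ρ) (hρ₁ : ρ < 1) :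
    ∑ a : ZMod n, ρ ^ a.valMinAbs.natAbs ≤ (1 + ρ) / (1 - ρ) := by
  have hmin (a : ZMod n) : ρ ^ a.valMinAbs.natAbs ≤ ρ ^ a.val + ρ * ρ ^ (n - 1 - a.val) := by
    have := a.val_lt
    rw [a.valMinAbs_natAbs_eq_min, ← pow_succ', show n - 1 - a.val + 1 = n - a.val by omega]
    rcases min_choice a.val (n - a.val) with h | h <;> rw [h]
    · exact le_add_of_nonneg_right (by positivity)
    · exact le_add_of_nonneg_left (by positivity)
  have hgeom : ∑ v ∈ range n, ρ ^ v ≤ 1 / (1 - ρ) := by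
    have := geom_sum_Ico_le_of_lt_one (m := 0) (n := n) hρ₀ hρ₁
    rwa [← range_eq_Ico, pow_zero] at this
  calc ∑ a : ZMod n, ρ ^ a.valMinAbs.natAbs
      ≤ ∑ a : ZMod n, (ρ ^ a.val + ρ * ρ ^ (n - 1 - a.val)) := sum_le_sum fun a _ => hmin a
    _ = (1 + ρ) * ∑ v ∈ range n, ρ ^ v := by
      rw [ZMod.sum_val_eq_sum_range (fun v => ρ ^ v + ρ * ρ ^ (n - 1 - v)), sum_add_distrib,
        ← mul_sum, sum_range_reflect (fun v => ρ ^ v)]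
      ring
    _ ≤ (1 + ρ) * (1 / (1 - ρ)) := by gcongr
    _ = (1 + ρ) / (1 - ρ) := by ring

lemma ZMod.stdAddChar_add_stdAddChar_neg {n : ℕ} [NeZero n] (a : ZMod n) :
    stdAddChar a + stdAddChar (-a) = (2 * cos (2 * π * a.valMinAbs / n) : ℝ) := by
  conv_lhs => rw [← a.coe_valMinAbs, ← Int.cast_neg, stdAddChar_coe, stdAddChar_coe]
  push_cast
  rw [Complex.two_cos]
  congr 2 <;> ring

lemma sum_prod_of_ne_zero {α R : Type*} [Fintype α] [Zero α] [DecidableEq α] [CommRing R]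
    {f : α → R} (hf : f 0 = 1) (m : ℕ) :
    ∑ k : Fin m → α with k ≠ 0, ∏ i, f (k i) = (∑ a, f a) ^ m - 1 := by
  rw [Fintype.sum_pow, ← sum_filter_add_sum_filter_not univ (· ≠ 0)]
  simp [filter_eq', hf]

lemma eight_mul_sq_le_one_sub_cos {x : ℝ} (hx : |x| ≤ 1 / 2) : 8 * x ^ 2 ≤ 1 - cos (2 * π * x) := by
  have h : |2 * π * x| ≤ π := by
    rw [abs_mul, abs_of_pos (by positivity)]
    nlinarith [pi_pos]
  have := cos_le_one_sub_mul_cos_sq h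
  field_simp at this
  nlinarith [pi_pos]

lemma exp_le_five_quarters {x : ℝ} (hx : x ≤ 1 / 5) : exp x ≤ 5 / 4 := by
  rcases le_or_gt x 0 with h | h
  · linarith [exp_le_one_iff.2 h]
  · calc exp x ≤ 1 / (1 - x) := (exp_bound_div_one_sub_of_interval' h (by linarith)).le
      _ ≤ 5 / 4 := by rw [div_le_iff₀ (by linarith)]; linarith

lemma one_add_div_one_sub_pow_le {ρ : ℝ} {d : ℕ} (hρ₀ : 0 ≤ ρ) (hρ : ρ ≤ 1 / 3)
    (hdρ : d * ρ ≤ 1 / 15) : ((1 + ρ) / (1 - ρ)) ^ d ≤ 5 / 4 := by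
  have hρexp : (1 + ρ) / (1 - ρ) ≤ exp (3 * ρ) :=
    calc (1 + ρ) / (1 - ρ) ≤ 3 * ρ + 1 := by rw [div_le_iff₀ (by linarith)]; nlinarith
      _ ≤ exp (3 * ρ) := add_one_le_exp _
  calc ((1 + ρ) / (1 - ρ)) ^ d ≤ exp (3 * ρ) ^ d :=
        pow_le_pow_left₀ (div_nonneg (by linarith) (by linarith)) hρexp d
    _ = exp (3 * (d * ρ)) := by rw [← exp_nat_mul]; ring_nf
    _ ≤ 5 / 4 := exp_le_five_quarters (by linarith)

lemma natCast_mul_inv_pow_ten_le {d : ℕ} (hd : 2 ≤ d) : d * ((d : ℝ) ^ 10)⁻¹ ≤ 1 / 15 := by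
  have hd' : (2 : ℝ) ≤ d := by exact_mod_cast hd
  rw [show (d : ℝ) * ((d : ℝ) ^ 10)⁻¹ = ((d : ℝ) ^ 9)⁻¹ by field_simp,
    inv_le_comm₀ (by positivity) (by norm_num)]
  calc (1 / 15 : ℝ)⁻¹ ≤ 2 ^ 9 := by norm_num
    _ ≤ (d : ℝ) ^ 9 := by gcongr

lemma half_le_log_natCast {d : ℕ} (hd : 2 ≤ d) : 1 / 2 ≤ log d := by
  have : log 2 ≤ log d := log_le_log (by norm_num) (by exact_mod_cast hd)
  linarith [log_two_gt_d9]

noncomputable section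

namespace RandomWalk

section FiniteAbelianGroup

variable {G : Type*} [AddCommGroup G] [Fintype G]

def fourierCoeff (μ : G → ℝ) (ψ : AddChar G ℂ) : ℂ := ∑ z, μ z * ψ z

lemma fourierCoeff_zero (μ : G → ℝ) : fourierCoeff μ 0 = ∑ z, μ z := by
  simp [fourierCoeff]

variable [DecidableEq G] {μ : G → ℝ} {P : Matrix G G ℝ}

theorem pow_apply_eq_sum_addChar (hP : ∀ x y, P x y = μ (y - x)) (t : ℕ) (x y : G) :
    ((P ^ t) x y : ℂ) =
      (Fintype.card G : ℂ)⁻¹ * ∑ ψ : AddChar G ℂ, fourierCoeff μ ψ ^ t * ψ (x - y) := by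
  induction t generalizing y with
  | zero =>
    simp only [pow_zero, one_mul, AddChar.sum_apply_eq_ite, sub_eq_zero, Matrix.one_apply]
    split_ifs <;> simp
  | succ t ih =>
    have step (ψ : AddChar G ℂ) : ∑ w, ψ (x - w) * μ (y - w) = ψ (x - y) * fourierCoeff μ ψ := by
      rw [fourierCoeff, mul_sum]
      refine Fintype.sum_equiv (Equiv.subLeft y) _ _ fun w => ?_
      rw [Equiv.subLeft_apply, show x - w = x - y + (y - w) by abel, AddChar.map_add_eq_mul]
      ring
    simp only [pow_succ, Matrix.mul_apply, Complex.ofReal_sum, Complex.ofReal_mul, ih, hP,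
      sum_mul, mul_sum]
    rw [sum_comm]
    refine sum_congr rfl fun ψ _ => ?_
    simp only [mul_assoc, ← mul_sum, step]
    ring

theorem abs_pow_apply_sub_inv_card_le (hμ : ∑ z, μ z = 1) (hP : ∀ x y, P x y = μ (y - x))
    (t : ℕ) (x y : G) :
    |(P ^ t) x y - (Fintype.card G : ℝ)⁻¹| ≤
      (Fintype.card G : ℝ)⁻¹ * ∑ ψ with ψ ≠ 0, ‖fourierCoeff μ ψ‖ ^ t := by
  have hsplit : ((P ^ t) x y : ℂ) - (Fintype.card G : ℂ)⁻¹ =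
      (Fintype.card G : ℂ)⁻¹ * ∑ ψ with ψ ≠ 0, fourierCoeff μ ψ ^ t * ψ (x - y) := by
    rw [pow_apply_eq_sum_addChar hP, ← sum_filter_add_sum_filter_not univ (· ≠ 0)]
    simp [filter_eq', fourierCoeff_zero, hμ, mul_add]
  rw [← Real.norm_eq_abs, ← Complex.norm_real, Complex.ofReal_sub, Complex.ofReal_inv,
    Complex.ofReal_natCast, hsplit, norm_mul, norm_inv, Complex.norm_natCast]
  gcongr
  refine (norm_sum_le _ _).trans_eq (sum_congr rfl fun ψ _ => ?_)
  rw [norm_mul, norm_pow, AddChar.norm_apply, mul_one]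

theorem abs_sum_pow_apply_sub_le (hμ : ∑ z, μ z = 1) (hP : ∀ x y, P x y = μ (y - x)) (t : ℕ)
    (x : G) (A : Finset G) :
    |∑ y ∈ A, (P ^ t) x y - ∑ _y ∈ A, (Fintype.card G : ℝ)⁻¹| ≤
      ∑ ψ with ψ ≠ 0, ‖fourierCoeff μ ψ‖ ^ t := by
  set S := ∑ ψ with ψ ≠ 0, ‖fourierCoeff μ ψ‖ ^ t
  rw [← sum_sub_distrib]
  calc |∑ y ∈ A, ((P ^ t) x y - (Fintype.card G : ℝ)⁻¹)|
      ≤ ∑ y ∈ A, |(P ^ t) x y - (Fintype.card G : ℝ)⁻¹| := abs_sum_le_sum_abs _ _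
    _ ≤ ∑ y ∈ A, (Fintype.card G : ℝ)⁻¹ * S :=
        sum_le_sum fun y _ => abs_pow_apply_sub_inv_card_le hμ hP t x y
    _ ≤ ∑ _y : G, (Fintype.card G : ℝ)⁻¹ * S :=
        sum_le_sum_of_subset_of_nonneg (subset_univ A) fun _ _ _ => by positivity
    _ = S := by simp [Fintype.card_ne_zero]

end FiniteAbelianGroup

variable {d n : ℕ}

section Characters

variable [NeZero n]

def torusChar (k : Fin d → ZMod n) : AddChar (Fin d → ZMod n) ℂ where
  toFun z := ZMod.stdAddChar (k ⬝ᵥ z)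
  map_zero_eq_one' := by simp
  map_add_eq_mul' z w := by rw [dotProduct_add, AddChar.map_add_eq_mul]

lemma torusChar_apply (k z : Fin d → ZMod n) : torusChar k z = ZMod.stdAddChar (k ⬝ᵥ z) := rfl

lemma torusChar_apply_single (k : Fin d → ZMod n) (i : Fin d) (c : ZMod n) :
    torusChar k (Pi.single i c) = ZMod.stdAddChar (k i * c) := by
  rw [torusChar_apply, dotProduct_single]

lemma torusChar_bijective : Function.Bijective (torusChar (d := d) (n := n)) := by
  refine (Fintype.bijective_iff_injective_and_card _).2 ⟨fun k l hkl => funext fun i => ?_, by simp⟩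
  have := DFunLike.congr_fun hkl (Pi.single i 1)
  simpa [torusChar_apply_single] using ZMod.injective_stdAddChar this

lemma torusChar_zero : torusChar (0 : Fin d → ZMod n) = 0 := by
  ext z
  simp [torusChar_apply]

lemma torusChar_eq_zero {k : Fin d → ZMod n} : torusChar k = 0 ↔ k = 0 := by
  rw [← torusChar_zero, torusChar_bijective.injective.eq_iff]

end Characters

variable (d n) in
def torusStep [NeZero n] (z : Fin d → ZMod n) : ℝ :=
  1 / 2 * (if z = 0 then 1 else 0)
    + ∑ i : Fin d, (1 / (4 * (d : ℝ)) * (if z = Pi.single i 1 then 1 else 0)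
      + 1 / (4 * (d : ℝ)) * (if z = Pi.single i (-1) then 1 else 0))

variable (n) in
def torusEigenvalue (k : Fin d → ZMod n) : ℝ :=
  1 - (∑ i, (1 - cos (2 * π * (k i).valMinAbs / n))) / (2 * d)

lemma torusEigenvalue_nonneg (k : Fin d → ZMod n) : 0 ≤ torusEigenvalue n k := by
  have : ∑ i, (1 - cos (2 * π * (k i).valMinAbs / n)) ≤ 2 * d :=
    calc ∑ i, (1 - cos (2 * π * (k i).valMinAbs / n)) ≤ ∑ _i : Fin d, (2 : ℝ) :=
          sum_le_sum fun i _ => by linarith [neg_one_le_cos (2 * π * (k i).valMinAbs / n)]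
      _ = 2 * d := by simp [mul_comm]
  rw [torusEigenvalue, sub_nonneg]
  exact div_le_one_of_le₀ this (by positivity)

lemma torusEigenvalue_pow_le (k : Fin d → ZMod n) (t : ℕ) :
    torusEigenvalue n k ^ t ≤
      ∏ i, exp (-(t / (2 * d) * (1 - cos (2 * π * (k i).valMinAbs / n)))) := by
  calc torusEigenvalue n k ^ t
      ≤ exp (-((∑ i, (1 - cos (2 * π * (k i).valMinAbs / n))) / (2 * d))) ^ t := by
        gcongr
        · exact torusEigenvalue_nonneg k
        · rw [torusEigenvalue]
          linarith [add_one_le_exp (-((∑ i, (1 - cos (2 * π * (k i).valMinAbs / n))) / (2 * d)))]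
    _ = _ := by
        rw [← exp_nat_mul, ← exp_sum, sum_div, mul_neg, mul_sum, ← sum_neg_distrib]
        exact congrArg exp (sum_congr rfl fun i _ => by ring)

section Estimates

variable [NeZero n]

lemma fourierCoeff_torusStep (ψ : AddChar (Fin d → ZMod n) ℂ) :
    fourierCoeff (torusStep d n) ψ =
      1 / 2 + 1 / (4 * (d : ℂ)) * ∑ i, (ψ (Pi.single i 1) + ψ (Pi.single i (-1))) := by
  simp only [fourierCoeff, torusStep, Complex.ofReal_add, Complex.ofReal_mul, Complex.ofReal_sum,
    apply_ite Complex.ofReal, add_mul, sum_mul, sum_add_distrib, mul_assoc, ite_mul]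
  rw [sum_comm, sum_comm (f := fun _ _ => _ * (if _ = Pi.single _ (-1) then _ else _))]
  simp [← mul_sum, mul_add]

lemma fourierCoeff_torusStep_torusChar (hd : d ≠ 0) (k : Fin d → ZMod n) :
    fourierCoeff (torusStep d n) (torusChar k) = torusEigenvalue n k := by
  simp only [fourierCoeff_torusStep, torusChar_apply_single, mul_one, mul_neg_one,
    ZMod.stdAddChar_add_stdAddChar_neg, torusEigenvalue]
  push_cast
  rw [← mul_sum, sum_sub_distrib]
  simp only [sum_const, card_univ, Fintype.card_fin, nsmul_eq_mul, mul_one]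
  field_simp
  ring

lemma sum_torusStep (hd : d ≠ 0) : ∑ z, torusStep d n z = 1 := by
  have h := fourierCoeff_torusStep_torusChar (n := n) hd 0
  have h₀ : torusEigenvalue n (0 : Fin d → ZMod n) = 1 := by simp [torusEigenvalue]
  rw [torusChar_zero, fourierCoeff_zero, h₀] at h
  exact_mod_cast h

lemma sum_norm_fourierCoeff_torusStep_pow (hd : d ≠ 0) (t : ℕ) :
    ∑ ψ with ψ ≠ 0, ‖fourierCoeff (torusStep d n) ψ‖ ^ t =
      ∑ k : Fin d → ZMod n with k ≠ 0, torusEigenvalue n k ^ t := by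
  rw [sum_filter, sum_filter, ← torusChar_bijective.sum_comp]
  refine sum_congr rfl fun k _ => ?_
  simp only [fourierCoeff_torusStep_torusChar hd, Complex.norm_real,
    Real.norm_of_nonneg (torusEigenvalue_nonneg k), ne_eq, torusChar_eq_zero]

lemma ten_mul_log_mul_natAbs_le (hd : 2 ≤ d) {t : ℕ} (ht : 3 * d * log d * n ^ 2 - 1 ≤ t)
    {j : ℤ} (hj : |(j : ℝ)| * 2 ≤ n) :
    10 * log d * j.natAbs ≤ t / (2 * d) * (1 - cos (2 * π * j / n)) := by
  have hn : (1 : ℝ) ≤ n := by exact_mod_cast Nat.one_le_iff_ne_zero.2 (NeZero.ne n)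
  have hd' : (2 : ℝ) ≤ d := by exact_mod_cast hd
  have hL := half_le_log_natCast hd
  set m : ℝ := ((j.natAbs : ℕ) : ℝ) with hm
  have hjm : |(j : ℝ)| = m := by rw [hm, Nat.cast_natAbs, Int.cast_abs]
  have hm₀ : 0 ≤ m := by positivity
  have hm_le_sq : m ≤ m ^ 2 := by
    rw [hm]; exact_mod_cast Nat.le_self_pow two_ne_zero _
  have hcos : 8 * m ^ 2 / n ^ 2 ≤ 1 - cos (2 * π * j / n) := by
    have hx : |(j : ℝ) / n| ≤ 1 / 2 := by
      rw [abs_div, abs_of_pos (by linarith : (0 : ℝ) < n), div_le_iff₀ (by linarith)]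
      linarith
    have := eight_mul_sq_le_one_sub_cos hx
    rwa [div_pow, ← sq_abs, hjm, ← mul_div_assoc, mul_div_assoc'] at this
  have hlower : (3 * d * log d * n ^ 2 - 1) / (2 * d) * (8 * m ^ 2 / n ^ 2)
      ≤ t / (2 * d) * (1 - cos (2 * π * j / n)) :=
    mul_le_mul (by gcongr) hcos (by positivity) (by positivity)
  have hexpand : (3 * d * log d * n ^ 2 - 1) / (2 * d) * (8 * m ^ 2 / n ^ 2)
      = 12 * log d * m ^ 2 - 4 * m ^ 2 / (d * n ^ 2) := by
    field_simp
    ring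
  have herror : 4 * m ^ 2 / (d * n ^ 2) ≤ m := by
    rw [div_le_iff₀ (by positivity)]
    rw [hjm] at hj
    nlinarith [mul_le_mul_of_nonneg_left hj hm₀,
      mul_le_mul hd' (le_self_pow₀ hn two_ne_zero) (by linarith) (by linarith)]
  nlinarith [mul_le_mul_of_nonneg_left hm_le_sq (by linarith : 0 ≤ log d),
    mul_le_mul_of_nonneg_right hL hm₀]

lemma exp_neg_mul_one_sub_cos_le (hd : 2 ≤ d) {t : ℕ} (ht : 3 * d * log d * n ^ 2 - 1 ≤ t)
    (a : ZMod n) :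
    exp (-(t / (2 * d) * (1 - cos (2 * π * a.valMinAbs / n)))) ≤
      ((d : ℝ) ^ 10)⁻¹ ^ a.valMinAbs.natAbs := by
  have hj : |(a.valMinAbs : ℝ)| * 2 ≤ n := by
    obtain ⟨h₁, h₂⟩ := a.valMinAbs_mem_Ioc
    rw [← abs_two, ← abs_mul]
    exact abs_le.2 ⟨by exact_mod_cast h₁.le, by exact_mod_cast h₂⟩
  have hd₀ : (0 : ℝ) < d := by positivity
  calc exp (-(t / (2 * d) * (1 - cos (2 * π * a.valMinAbs / n))))
      ≤ exp (a.valMinAbs.natAbs * -log ((d : ℝ) ^ 10)) := by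
        rw [Real.log_pow, mul_neg, exp_le_exp, neg_le_neg_iff]
        push_cast
        linarith [ten_mul_log_mul_natAbs_le hd ht hj]
    _ = ((d : ℝ) ^ 10)⁻¹ ^ a.valMinAbs.natAbs := by
        rw [exp_nat_mul, exp_neg, exp_log (by positivity)]

theorem sum_torusEigenvalue_pow_le (hd : 2 ≤ d) {t : ℕ} (ht : 3 * d * log d * n ^ 2 - 1 ≤ t) :
    ∑ k : Fin d → ZMod n with k ≠ 0, torusEigenvalue n k ^ t ≤ 1 / 4 := by
  set ρ := ((d : ℝ) ^ 10)⁻¹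
  have hdρ : d * ρ ≤ 1 / 15 := natCast_mul_inv_pow_ten_le hd
  have hρ₀ : 0 ≤ ρ := by positivity
  have hρ : ρ ≤ 1 / 3 := by
    have : (1 : ℝ) ≤ d := by exact_mod_cast (by omega : 1 ≤ d)
    nlinarith
  calc ∑ k : Fin d → ZMod n with k ≠ 0, torusEigenvalue n k ^ t
      ≤ ∑ k : Fin d → ZMod n with k ≠ 0, ∏ i, ρ ^ (k i).valMinAbs.natAbs :=
        sum_le_sum fun k _ => (torusEigenvalue_pow_le k t).trans <|
          prod_le_prod (fun _ _ => (exp_pos _).le) fun i _ => exp_neg_mul_one_sub_cos_le hd ht _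
    _ = (∑ a : ZMod n, ρ ^ a.valMinAbs.natAbs) ^ d - 1 :=
        sum_prod_of_ne_zero (f := fun a : ZMod n => ρ ^ a.valMinAbs.natAbs) (by simp) d
    _ ≤ ((1 + ρ) / (1 - ρ)) ^ d - 1 := by
        gcongr
        exact ZMod.sum_pow_natAbs_valMinAbs_le hρ₀ (by linarith)
    _ ≤ 1 / 4 := by linarith [one_add_div_one_sub_pow_le hρ₀ hρ hdρ]

end Estimates

end RandomWalk

end

open RandomWalk in
/-- For lazy random walk on the `d`-dimensional torus `(ℤ/nℤ)^d` with `d ≥ 2`, the total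
variation mixing time satisfies `t_mix ≤ 3 d (log d) n²`: there is a time `t` at most
`3 d (log d) n²` at which the walk is within total variation distance `1/4` of the uniform
stationary distribution, from every starting state. -/
theorem torus_mixing (d n : ℕ) (hd : 2 ≤ d) [NeZero n]
    (P : Matrix (Fin d → ZMod n) (Fin d → ZMod n) ℝ)
    (hP : ∀ x y, P x y = (1 / 2) * (if y = x then 1 else 0)
        + ∑ i : Fin d,
          ((1 / (4 * (d : ℝ))) * (if y = Function.update x i (x i + 1) then 1 else 0)
            + (1 / (4 * (d : ℝ))) * (if y = Function.update x i (x i - 1) then 1 else 0))) :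
    ∃ t : ℕ, (t : ℝ) ≤ 3 * d * Real.log d * n ^ 2 ∧
      ∀ x : Fin d → ZMod n,
        (Finset.univ.sup' ⟨∅, Finset.mem_univ _⟩
          fun A : Finset (Fin d → ZMod n) =>
            |∑ y ∈ A, (P ^ t) x y - ∑ y ∈ A, ((n : ℝ))⁻¹ ^ d|) ≤ 1 / 4 := by
  have hd₀ : d ≠ 0 := by omega
  have hstep (x y : Fin d → ZMod n) : P x y = torusStep d n (y - x) := by
    simp only [hP, torusStep, sub_eq_zero, sub_eq_add_neg (x _) 1,
      Function.update_add_eq_add_single, ← sub_eq_iff_eq_add']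
  have hcard : (Fintype.card (Fin d → ZMod n) : ℝ)⁻¹ = (n : ℝ)⁻¹ ^ d := by
    simp [ZMod.card, inv_pow]
  have hlog : 0 ≤ log d := log_natCast_nonneg d
  refine ⟨⌊3 * d * log d * n ^ 2⌋₊, Nat.floor_le (by positivity), fun x =>
    sup'_le _ _ fun A _ => ?_⟩
  rw [← hcard]
  calc _ ≤ _ := abs_sum_pow_apply_sub_le (sum_torusStep hd₀) hstep _ x A
    _ = _ := sum_norm_fourierCoeff_torusStep_pow hd₀ _
    _ ≤ 1 / 4 := sum_torusEigenvalue_pow_le hd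
        (by linarith [Nat.lt_floor_add_one (3 * d * log d * n ^ 2 : ℝ)])
end

section
/- For a reversible Markov chain on a finite state space, s_x(2t) ≤ 4 d(t), where s_x is the separation distance from x and d(t) = max_y ‖P^t(y,·) − π‖_TV. -/
/-!
By reversibility, `P^{2t}(x,y)/π(y) = ∑_z P^t(x,z) P^t(y,z) / π(z)`. Cauchy–Schwarz (in
Sedrakyan's form, using `∑ π = 1`) bounds this below by `m²`, where
`m = ∑_z min(P^t(x,z), P^t(y,z))` is the overlap of the two rows. The overlap misses `1` by the
mass that `P^t(x,·)` puts in excess of `P^t(y,·)` on `A = {z | P^t(y,z) < P^t(x,z)}`, which is at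
most `2 d(t)` after comparing both rows with `π` on `A`. Hence
`1 - P^{2t}(x,y)/π(y) ≤ 1 - m² ≤ 1 - (1 - 2d)² ≤ 4d` when `1 - 2d ≥ 0`, and trivially otherwise.
-/

open Finset Matrix

section DetailedBalance

variable {R S : Type*} [Fintype S] [DecidableEq S]

theorem Matrix.detailedBalance_pow [CommSemiring R] {P : Matrix S S R} {π : S → R}
    (hrev : ∀ a b, π a * P a b = π b * P b a) (n : ℕ) (a b : S) :
    π a * (P ^ n) a b = π b * (P ^ n) b a := by
  have hP : SemiconjBy (diagonal π) P Pᵀ := by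
    ext a b
    simp only [diagonal_mul, mul_diagonal, transpose_apply]
    rw [hrev, mul_comm]
  have := congrFun (congrFun (hP.pow_right n) a) b
  simpa [diagonal_mul, mul_diagonal, ← transpose_pow, mul_comm] using this

theorem Matrix.pow_two_mul_apply_div_eq_sum [Field R] {P : Matrix S S R} {π : S → R}
    (hπ : ∀ z, π z ≠ 0) (hrev : ∀ a b, π a * P a b = π b * P b a) (t : ℕ) (x y : S) :
    (P ^ (2 * t)) x y / π y = ∑ z, (P ^ t) x z * (P ^ t) y z / π z := by
  rw [two_mul, pow_add, mul_apply, sum_div]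
  refine sum_congr rfl fun z _ => ?_
  have := detailedBalance_pow hrev t z y
  field_simp [hπ y, hπ z]
  linear_combination (P ^ t) x z * this

end DetailedBalance

section Overlap

variable {ι R : Type*} [Fintype ι] [Field R] [LinearOrder R] [IsStrictOrderedRing R]

theorem one_sub_two_mul_le_sum_min {a b μ : ι → R} (ha : ∑ z, a z = 1) {d : R}
    (had : ∀ A : Finset ι, |∑ z ∈ A, a z - ∑ z ∈ A, μ z| ≤ d)
    (hbd : ∀ A : Finset ι, |∑ z ∈ A, b z - ∑ z ∈ A, μ z| ≤ d) :
    1 - 2 * d ≤ ∑ z, min (a z) (b z) := by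
  set A := univ.filter fun z => b z < a z
  have hexcess : ∑ z, (a z - min (a z) (b z)) = ∑ z ∈ A, (a z - b z) := by
    rw [sum_filter]
    refine sum_congr rfl fun z _ => ?_
    split_ifs with h
    · rw [min_eq_right h.le]
    · rw [min_eq_left (not_lt.mp h), sub_self]
  have hA : ∑ z ∈ A, (a z - b z)
      = (∑ z ∈ A, a z - ∑ z ∈ A, μ z) - (∑ z ∈ A, b z - ∑ z ∈ A, μ z) := by
    rw [sum_sub_distrib]; ring
  rw [sum_sub_distrib, ha, hA] at hexcess
  linarith [le_abs_self (∑ z ∈ A, a z - ∑ z ∈ A, μ z),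
    neg_abs_le (∑ z ∈ A, b z - ∑ z ∈ A, μ z), had A, hbd A]

theorem sq_sum_min_le_sum_mul_div {a b π : ι → R} (ha : ∀ z, 0 ≤ a z) (hb : ∀ z, 0 ≤ b z)
    (hπ : ∀ z, 0 < π z) (hπ1 : ∑ z, π z = 1) :
    (∑ z, min (a z) (b z)) ^ 2 ≤ ∑ z, a z * b z / π z := by
  have hmin_sq : ∀ z, min (a z) (b z) ^ 2 ≤ a z * b z := fun z => by
    rw [sq]
    exact mul_le_mul (min_le_left _ _) (min_le_right _ _) (le_min (ha z) (hb z)) (ha z)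
  calc (∑ z, min (a z) (b z)) ^ 2 = (∑ z, min (a z) (b z)) ^ 2 / ∑ z, π z := by
        rw [hπ1, div_one]
    _ ≤ ∑ z, min (a z) (b z) ^ 2 / π z :=
        sq_sum_div_le_sum_sq_div _ _ fun z _ => hπ z
    _ ≤ ∑ z, a z * b z / π z :=
        sum_le_sum fun z _ => div_le_div_of_nonneg_right (hmin_sq z) (hπ z).le

end Overlap

/-- For a reversible Markov chain on a finite state space, `s_x(2t) ≤ 4 d(t)`, where
`s_x(t) = max_y (1 − P^t(x,y)/π(y))` is the separation distance and
`d(t) = max_y ‖P^t(y,·) − π‖_TV`. -/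
theorem sep_two_t_le_four_d {S : Type*} [Fintype S] [DecidableEq S] [Nonempty S]
    (P : Matrix S S ℝ) (hP0 : ∀ a b, 0 ≤ P a b) (hP1 : ∀ a, ∑ b, P a b = 1)
    (π : S → ℝ) (hπpos : ∀ y, 0 < π y) (hπ1 : ∑ y, π y = 1)
    (hrev : ∀ a b, π a * P a b = π b * P b a) (x : S) (t : ℕ) :
    (Finset.univ.sup' Finset.univ_nonempty fun y : S => 1 - (P ^ (2 * t)) x y / π y)
      ≤ 4 * Finset.univ.sup' Finset.univ_nonempty (fun z : S =>
          Finset.univ.sup' ⟨∅, Finset.mem_univ _⟩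
            fun A : Finset S => |∑ y ∈ A, (P ^ t) z y - ∑ y ∈ A, π y|) := by
  set d := univ.sup' univ_nonempty fun z : S => univ.sup' ⟨∅, mem_univ _⟩
    fun A : Finset S => |∑ y ∈ A, (P ^ t) z y - ∑ y ∈ A, π y|
  have hd : ∀ z (A : Finset S), |∑ y ∈ A, (P ^ t) z y - ∑ y ∈ A, π y| ≤ d := fun z A =>
    le_sup'_of_le _ (mem_univ z) (le_sup'_of_le _ (mem_univ A) le_rfl)
  have hd0 : 0 ≤ d := by simpa using hd x ∅
  have hPt : P ^ t ∈ rowStochastic ℝ S := pow_mem (mem_rowStochastic_iff_sum.2 ⟨hP0, hP1⟩) t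
  refine sup'_le _ _ fun y _ => ?_
  have hoverlap := one_sub_two_mul_le_sum_min (sum_row_of_mem_rowStochastic hPt x) (hd x) (hd y)
  have hPt0 : ∀ a b, 0 ≤ (P ^ t) a b := fun _ _ => nonneg_of_mem_rowStochastic hPt
  have hCS := sq_sum_min_le_sum_mul_div (hPt0 x) (hPt0 y) hπpos hπ1
  have hm0 : 0 ≤ ∑ z, min ((P ^ t) x z) ((P ^ t) y z) :=
    sum_nonneg fun z _ => le_min (hPt0 x z) (hPt0 y z)
  rw [pow_two_mul_apply_div_eq_sum (fun z => (hπpos z).ne') hrev]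
  nlinarith
end

section
/- For reversible P with stationary distribution π, for all x, y and t: P^{2t}(x,y)/π(y) ≥ (Σ_z min(P^t(x,z), P^t(y,z)))² = (1 − ‖P^t(x,·) − P^t(y,·)‖_TV)². -/
/-!
Reversibility makes `diagonal π` conjugate `P` to `Pᵀ`, hence also `P ^ t` to `(P ^ t)ᵀ`, so
`P^{2t}(x,y)/π(y) = ∑_z P^t(x,z) P^t(y,z) / π(z)`. Since `min(p, q)² ≤ p q`, Cauchy-Schwarz in
Sedrakyan's form against the probability weights `π` bounds this below by `(∑_z min)²`.
The total-variation identity holds for any two probability vectors `a, b`: both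
`1 - ∑ min(a, b)` and the largest `|a(A) - b(A)|` equal `∑ (a - b)⁺`, the latter attained at
`A = {a ≥ b}`.
-/

open Finset Matrix

section Reversible

variable {S : Type*} [Fintype S] [DecidableEq S] {P : Matrix S S ℝ} {π : S → ℝ}

theorem Matrix.semiconjBy_diagonal_of_reversible (hrev : ∀ a b, π a * P a b = π b * P b a) :
    SemiconjBy (diagonal π) P Pᵀ := by
  ext a b
  rw [diagonal_mul, mul_diagonal, transpose_apply, hrev, mul_comm]

theorem Matrix.reversible_pow (hrev : ∀ a b, π a * P a b = π b * P b a) (t : ℕ) (a b : S) :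
    π a * (P ^ t) a b = π b * (P ^ t) b a := by
  have h := congr_fun₂ ((semiconjBy_diagonal_of_reversible hrev).pow_right t) a b
  simpa [SemiconjBy, ← transpose_pow, diagonal_mul, mul_diagonal, mul_comm] using h

theorem Matrix.pow_two_mul_apply_div_of_reversible (hrev : ∀ a b, π a * P a b = π b * P b a)
    (hπ : ∀ z, π z ≠ 0) (t : ℕ) (x y : S) :
    (P ^ (2 * t)) x y / π y = ∑ z, (P ^ t) x z * (P ^ t) y z / π z := by
  rw [two_mul, pow_add, mul_apply, sum_div]
  refine sum_congr rfl fun z _ => ?_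
  rw [div_eq_div_iff (hπ y) (hπ z), mul_assoc, mul_assoc, mul_comm ((P ^ t) z y),
    reversible_pow hrev, mul_comm (π y)]

end Reversible

theorem Finset.sq_sum_min_div_le_sum_mul_div {ι : Type*} (s : Finset ι) {a b w : ι → ℝ}
    (ha : ∀ i ∈ s, 0 ≤ a i) (hb : ∀ i ∈ s, 0 ≤ b i) (hw : ∀ i ∈ s, 0 < w i) :
    (∑ i ∈ s, min (a i) (b i)) ^ 2 / ∑ i ∈ s, w i ≤ ∑ i ∈ s, a i * b i / w i := by
  refine (sq_sum_div_le_sum_sq_div s _ hw).trans (sum_le_sum fun i hi => ?_)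
  gcongr
  · exact (hw i hi).le
  · rw [sq]
    exact mul_le_mul (min_le_left _ _) (min_le_right _ _) (le_min (ha i hi) (hb i hi)) (ha i hi)

theorem Finset.sum_min_eq_sum_sub_sum_posPart {ι : Type*} (s : Finset ι) (a b : ι → ℝ) :
    ∑ i ∈ s, min (a i) (b i) = ∑ i ∈ s, a i - ∑ i ∈ s, (a i - b i)⁺ := by
  rw [← sum_sub_distrib]
  refine sum_congr rfl fun i _ => ?_
  rcases le_total (a i) (b i) with h | h
  · rw [min_eq_left h, posPart_eq_zero.2 (sub_nonpos.2 h), sub_zero]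
  · rw [min_eq_right h, posPart_eq_self.2 (sub_nonneg.2 h), sub_sub_cancel]

section TotalVariation

variable {ι : Type*} [Fintype ι]

theorem Finset.sum_le_sum_posPart (A : Finset ι) (d : ι → ℝ) :
    ∑ i ∈ A, d i ≤ ∑ i, (d i)⁺ :=
  (sum_le_sum fun i _ => le_posPart (d i)).trans
    (sum_le_sum_of_subset_of_nonneg (subset_univ A) fun i _ _ => posPart_nonneg (d i))

theorem Finset.sup'_abs_sum_eq_sum_posPart [DecidableEq ι] {d : ι → ℝ} (hd : ∑ i, d i = 0) :
    univ.sup' ⟨∅, mem_univ _⟩ (fun A : Finset ι => |∑ i ∈ A, d i|) = ∑ i, (d i)⁺ := by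
  refine le_antisymm (sup'_le _ _ fun A _ => abs_le.2 ⟨?_, sum_le_sum_posPart A d⟩) ?_
  · have := sum_le_sum_posPart Aᶜ d
    linarith [sum_add_sum_compl A d]
  · classical
    calc ∑ i, (d i)⁺ = ∑ i ∈ univ.filter (fun i => 0 ≤ d i), d i := by
          rw [sum_filter]
          refine sum_congr rfl fun i _ => ?_
          split_ifs with h
          · exact posPart_eq_self.2 h
          · exact posPart_eq_zero.2 (not_le.1 h).le
      _ ≤ |∑ i ∈ univ.filter (fun i => 0 ≤ d i), d i| := le_abs_self _
      _ ≤ _ := le_sup' (fun A => |∑ i ∈ A, d i|) (mem_univ _)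

theorem Finset.sum_min_eq_one_sub_sup'_abs [DecidableEq ι] {a b : ι → ℝ}
    (ha : ∑ i, a i = 1) (hb : ∑ i, b i = 1) :
    ∑ i, min (a i) (b i) = 1 - univ.sup' ⟨∅, mem_univ _⟩
      (fun A : Finset ι => |∑ i ∈ A, a i - ∑ i ∈ A, b i|) := by
  simp_rw [← sum_sub_distrib]
  rw [sup'_abs_sum_eq_sum_posPart (by rw [sum_sub_distrib, ha, hb, sub_self]),
    sum_min_eq_sum_sub_sum_posPart, ha]

end TotalVariation

/-- For `P` reversible with respect to `π`:
`P^{2t}(x,y)/π(y) ≥ (∑_z min(P^t(x,z), P^t(y,z)))² = (1 − ‖P^t(x,·) − P^t(y,·)‖_TV)²`. -/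
theorem reversible_two_step_bound {S : Type*} [Fintype S] [DecidableEq S]
    (P : Matrix S S ℝ) (hP0 : ∀ a b, 0 ≤ P a b) (hP1 : ∀ a, ∑ b, P a b = 1)
    (π : S → ℝ) (hπpos : ∀ z, 0 < π z) (hπ1 : ∑ z, π z = 1)
    (hrev : ∀ a b, π a * P a b = π b * P b a) (x y : S) (t : ℕ) :
    (∑ z, min ((P ^ t) x z) ((P ^ t) y z)) ^ 2 ≤ (P ^ (2 * t)) x y / π y ∧
    (∑ z, min ((P ^ t) x z) ((P ^ t) y z))
      = 1 - (Finset.univ.sup' ⟨∅, Finset.mem_univ _⟩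
          fun A : Finset S => |∑ z ∈ A, (P ^ t) x z - ∑ z ∈ A, (P ^ t) y z|) := by
  have hPt : P ^ t ∈ rowStochastic ℝ S :=
    pow_mem (mem_rowStochastic_iff_sum.2 ⟨hP0, hP1⟩) t
  refine ⟨?_, sum_min_eq_one_sub_sup'_abs (sum_row_of_mem_rowStochastic hPt x)
    (sum_row_of_mem_rowStochastic hPt y)⟩
  rw [pow_two_mul_apply_div_of_reversible hrev (fun z => (hπpos z).ne')]
  simpa [hπ1] using sq_sum_min_div_le_sum_mul_div univ
    (fun z _ => nonneg_of_mem_rowStochastic hPt) (fun z _ => nonneg_of_mem_rowStochastic hPt)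
    (fun z _ => hπpos z)
end

section
/- For a reversible, irreducible, aperiodic finite Markov chain, |λ₂|^t ≤ 2 d(t) for all t, where λ₂ is the second largest eigenvalue of P in absolute value among the non-unit eigenvalues and d(t) = max_x ‖P^t(x,·) − π‖_TV. -/
/-!
If `P f = λ f` with `λ ≠ 1`, then `f` is orthogonal to the stationary distribution `π`, so
`λ^t f(x) = ∑_y (P^t(x,y) - π(y)) f(y)`. Taking `x` where `|f|` is maximal gives
`|λ|^t ≤ ∑_y |P^t(x,y) - π(y)|`, and this `ℓ¹` distance between two probability vectors is twice
their total variation distance, attained on the set where `P^t(x,·) ≥ π`.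
-/

open Finset Matrix

section

variable {S : Type*} [Fintype S]

theorem Matrix.sum_pow_apply_eq_one [DecidableEq S] {P : Matrix S S ℝ}
    (hP : ∀ a, ∑ b, P a b = 1) (n : ℕ) (a : S) : ∑ b, (P ^ n) a b = 1 := by
  induction n generalizing a with
  | zero => simp [Matrix.one_apply]
  | succ n ih =>
    simp only [pow_succ', Matrix.mul_apply]
    rw [Finset.sum_comm]
    simp only [← Finset.mul_sum, ih, mul_one, hP]

theorem Matrix.pow_mulVec_eq_pow_smul [DecidableEq S] {P : Matrix S S ℝ} {f : S → ℝ} {c : ℝ}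
    (hf : P *ᵥ f = c • f) (n : ℕ) : (P ^ n) *ᵥ f = c ^ n • f := by
  induction n with
  | zero => simp
  | succ n ih => rw [pow_succ, ← mulVec_mulVec, hf, mulVec_smul, ih, smul_smul, pow_succ']

theorem vecMul_eq_of_reversible {P : Matrix S S ℝ} {π : S → ℝ} (hP : ∀ a, ∑ b, P a b = 1)
    (hrev : ∀ a b, π a * P a b = π b * P b a) : π ᵥ* P = π := by
  ext b
  simp only [vecMul, dotProduct, hrev _ b, ← Finset.mul_sum, hP, mul_one]

theorem dotProduct_eq_zero_of_mulVec_eq_smul {P : Matrix S S ℝ} {π f : S → ℝ} {c : ℝ}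
    (hπ : π ᵥ* P = π) (hf : P *ᵥ f = c • f) (hc : c ≠ 1) : π ⬝ᵥ f = 0 := by
  have h : c * (π ⬝ᵥ f) = π ⬝ᵥ f := by
    rw [← smul_eq_mul, ← dotProduct_smul, ← hf, dotProduct_mulVec, hπ]
  have h' : (c - 1) * (π ⬝ᵥ f) = 0 := by rw [sub_mul, h, one_mul, sub_self]
  exact (mul_eq_zero.mp h').resolve_left (sub_ne_zero.mpr hc)

theorem abs_dotProduct_le_sum_abs_mul {g f : S → ℝ} {C : ℝ} (hf : ∀ y, |f y| ≤ C) :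
    |g ⬝ᵥ f| ≤ (∑ y, |g y|) * C :=
  calc |g ⬝ᵥ f| ≤ ∑ y, |g y * f y| := Finset.abs_sum_le_sum_abs _ _
    _ ≤ ∑ y, |g y| * C := by
      gcongr with y
      rw [abs_mul]
      exact mul_le_mul_of_nonneg_left (hf y) (abs_nonneg _)
    _ = (∑ y, |g y|) * C := (Finset.sum_mul _ _ _).symm

theorem sum_abs_eq_two_mul_sum_filter_nonneg {g : S → ℝ} (hg : ∑ y, g y = 0) :
    ∑ y, |g y| = 2 * ∑ y ∈ univ.filter (fun y => 0 ≤ g y), g y := by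
  have habs : ∀ y, |g y| = 2 * (if 0 ≤ g y then g y else 0) - g y := by
    intro y
    split_ifs with h
    · rw [abs_of_nonneg h]; ring
    · rw [abs_of_neg (not_le.mp h)]; ring
  simp only [habs, Finset.sum_sub_distrib, hg, sub_zero, ← Finset.mul_sum, Finset.sum_filter]

noncomputable def tvDist (μ ν : S → ℝ) : ℝ :=
  univ.sup' ⟨∅, mem_univ _⟩ fun A : Finset S => |∑ y ∈ A, μ y - ∑ y ∈ A, ν y|

theorem sum_abs_sub_le_two_mul_tvDist {μ ν : S → ℝ} (h : ∑ y, μ y = ∑ y, ν y) :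
    ∑ y, |μ y - ν y| ≤ 2 * tvDist μ ν := by
  have hsum : ∑ y, (μ y - ν y) = 0 := by rw [Finset.sum_sub_distrib, h, sub_self]
  rw [sum_abs_eq_two_mul_sum_filter_nonneg hsum, Finset.sum_sub_distrib]
  gcongr
  exact (le_abs_self _).trans (le_sup' (fun A : Finset S => |∑ y ∈ A, μ y - ∑ y ∈ A, ν y|)
    (mem_univ _))

theorem abs_mul_le_sum_abs_sub_mul {M : Matrix S S ℝ} {π f : S → ℝ} {c : ℝ}
    (hf : M *ᵥ f = c • f) (horth : π ⬝ᵥ f = 0) {x : S} (hx : ∀ y, |f y| ≤ |f x|) :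
    |c| * |f x| ≤ (∑ y, |M x y - π y|) * |f x| := by
  have h : c * f x = (M x - π) ⬝ᵥ f := by
    rw [sub_dotProduct, horth, sub_zero, ← smul_eq_mul, ← Pi.smul_apply, ← hf]
    rfl
  rw [← abs_mul, h]
  exact abs_dotProduct_le_sum_abs_mul hx

end

theorem eigenvalue_le_two_d_general {S : Type*} [Fintype S] [DecidableEq S] [Nonempty S]
    (P : Matrix S S ℝ) (hP1 : ∀ a, ∑ b, P a b = 1)
    (π : S → ℝ) (hπ1 : ∑ y, π y = 1)
    (hrev : ∀ a b, π a * P a b = π b * P b a)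
    (lam : ℝ) (heig : ∃ f : S → ℝ, f ≠ 0 ∧ P.mulVec f = lam • f) (hlam : lam ≠ 1)
    (t : ℕ) :
    |lam| ^ t ≤ 2 * Finset.univ.sup' Finset.univ_nonempty (fun x : S =>
        Finset.univ.sup' ⟨∅, Finset.mem_univ _⟩
          fun A : Finset S => |∑ y ∈ A, (P ^ t) x y - ∑ y ∈ A, π y|) := by
  obtain ⟨f, hf0, hf⟩ := heig
  obtain ⟨x, -, hx⟩ := exists_max_image univ (fun y => |f y|) univ_nonempty
  have hfx : 0 < |f x| := by
    obtain ⟨y, hy⟩ := Function.ne_iff.mp hf0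
    exact (abs_pos.mpr hy).trans_le (hx y (mem_univ y))
  have horth := dotProduct_eq_zero_of_mulVec_eq_smul (vecMul_eq_of_reversible hP1 hrev) hf hlam
  have hmix := abs_mul_le_sum_abs_sub_mul (pow_mulVec_eq_pow_smul hf t) horth
    (fun y => hx y (mem_univ y))
  calc |lam| ^ t = |lam ^ t| := (abs_pow lam t).symm
    _ ≤ ∑ y, |(P ^ t) x y - π y| := le_of_mul_le_mul_right hmix hfx
    _ ≤ 2 * tvDist ((P ^ t) x) π :=
      sum_abs_sub_le_two_mul_tvDist (by rw [sum_pow_apply_eq_one hP1, hπ1])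
    _ ≤ _ := by
      gcongr
      exact le_sup' (fun x : S => tvDist ((P ^ t) x) π) (mem_univ x)

/-- For a reversible, irreducible, aperiodic finite Markov chain with stationary distribution
`π`, any eigenvalue `λ ≠ 1` of `P` satisfies `|λ|^t ≤ 2 d(t)` for all `t`, where
`d(t) = max_x ‖P^t(x,·) − π‖_TV`. -/
theorem eigenvalue_le_two_d {S : Type*} [Fintype S] [DecidableEq S] [Nonempty S]
    (P : Matrix S S ℝ) (hP0 : ∀ a b, 0 ≤ P a b) (hP1 : ∀ a, ∑ b, P a b = 1)
    (π : S → ℝ) (hπpos : ∀ y, 0 < π y) (hπ1 : ∑ y, π y = 1)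
    (hrev : ∀ a b, π a * P a b = π b * P b a)
    (hprim : ∃ t : ℕ, ∀ a b, 0 < (P ^ t) a b)
    (lam : ℝ) (heig : ∃ f : S → ℝ, f ≠ 0 ∧ P.mulVec f = lam • f) (hlam : lam ≠ 1)
    (t : ℕ) :
    |lam| ^ t ≤ 2 * Finset.univ.sup' Finset.univ_nonempty (fun x : S =>
        Finset.univ.sup' ⟨∅, Finset.mem_univ _⟩
          fun A : Finset S => |∑ y ∈ A, (P ^ t) x y - ∑ y ∈ A, π y|) :=
  eigenvalue_le_two_d_general P hP1 π hπ1 hrev lam heig hlam t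
end

section
/- Let P be the transition matrix of simple random walk on a finite Cayley graph of a group G with symmetric generating set S of size d, and let λ be the second largest eigenvalue of P. If n ≤ 1/(1−λ), then E[ρ(X_0, X_n)²] ≥ n/(2d), where ρ is the graph distance. Consequently the relaxation time satisfies t_rel = 1/(1−λ) ≤ 2d·diam(G)². -/
/-!
For the symmetric, left-invariant walk `P`, the Dirichlet form `Qₙ(f) = ⟨f - Pⁿ f, f⟩` equals
`½ ∑_z Pⁿ(1, z) ‖f - f(· z)‖²`. Writing `z` as a geodesic word in `S`, the triangle inequality in
`ℓ²(G)` gives `‖f - f(· z)‖² ≤ ρ(1, z)² ∑_{s ∈ S} ‖f - f(· s)‖² = 2 d ρ(1, z)² Q₁(f)`, hence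
`Qₙ(f) ≤ d · E[ρ(X₀, Xₙ)²] · Q₁(f)`. For an eigenfunction with eigenvalue `λ` this reads
`1 - λⁿ ≤ d (1 - λ) E[ρ(X₀, Xₙ)²]`. Bernoulli's inequality gives `1 - λⁿ ≥ n (1 - λ) / 2` when
`n (1 - λ) ≤ 1`; choosing instead `n` with `λⁿ ≤ 1/2` and bounding `E[ρ²] ≤ diam²` gives the
bound on the relaxation time.
-/

open Finset Matrix

section DirichletForm

variable {ι : Type*} [Fintype ι]

lemma sum_mul_le_of_mem_rowStochastic [DecidableEq ι] {A : Matrix ι ι ℝ}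
    (hA : A ∈ rowStochastic ℝ ι) {h : ι → ℝ} {c : ℝ} (hc : ∀ j, h j ≤ c) (i : ι) :
    ∑ j, A i j * h j ≤ c :=
  calc ∑ j, A i j * h j ≤ ∑ j, A i j * c :=
        sum_le_sum fun j _ => mul_le_mul_of_nonneg_left (hc j) (nonneg_of_mem_rowStochastic hA)
    _ = c := by rw [← sum_mul, sum_row_of_mem_rowStochastic hA, one_mul]

noncomputable def dirichletForm (A : Matrix ι ι ℝ) (f : ι → ℝ) : ℝ := f ⬝ᵥ (f - A *ᵥ f)

lemma dirichletForm_eq_of_mulVec_eq_smul {A : Matrix ι ι ℝ} {f : ι → ℝ} {μ : ℝ}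
    (hf : A *ᵥ f = μ • f) : dirichletForm A f = (1 - μ) * (f ⬝ᵥ f) := by
  rw [dirichletForm, hf, dotProduct_sub, dotProduct_smul, smul_eq_mul]
  ring

variable [DecidableEq ι] {A : Matrix ι ι ℝ}

lemma pow_mulVec_eq_of_mulVec_eq_smul {f : ι → ℝ} {μ : ℝ}
    (hf : A *ᵥ f = μ • f) (n : ℕ) : (A ^ n) *ᵥ f = μ ^ n • f := by
  induction n with
  | zero => simp
  | succ n ih => rw [pow_succ, ← mulVec_mulVec, hf, mulVec_smul, ih, smul_smul, ← pow_succ']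

lemma dirichletForm_eq_half_sum (hA : A ∈ rowStochastic ℝ ι) (hsymm : Aᵀ = A) (f : ι → ℝ) :
    dirichletForm A f = (∑ x, ∑ y, A x y * (f x - f y) ^ 2) / 2 := by
  have hrow : ∀ x, ∑ y, A x y = 1 := sum_row_of_mem_rowStochastic hA
  have hcol : ∀ y, ∑ x, A x y = 1 := fun y => by
    rw [← hrow y]; exact sum_congr rfl fun x _ => congrFun₂ hsymm y x
  have hsq : ∑ x, ∑ y, A x y * f x ^ 2 = f ⬝ᵥ f := by
    simp only [← sum_mul, hrow, one_mul, dotProduct, sq]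
  have hsq' : ∑ x, ∑ y, A x y * f y ^ 2 = f ⬝ᵥ f := by
    rw [sum_comm]; simp only [← sum_mul, hcol, one_mul, dotProduct, sq]
  have hcross : ∑ x, ∑ y, A x y * (f x * f y) = f ⬝ᵥ (A *ᵥ f) := by
    simp only [dotProduct, mulVec, mul_sum]
    exact sum_congr rfl fun x _ => sum_congr rfl fun y _ => by ring
  have hexpand : ∀ x y, A x y * (f x - f y) ^ 2
      = A x y * f x ^ 2 + A x y * f y ^ 2 - 2 * (A x y * (f x * f y)) := fun x y => by ring
  simp only [hexpand, sum_add_distrib, sum_sub_distrib, ← mul_sum, hsq, hsq', hcross,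
    dirichletForm, dotProduct_sub]
  ring

lemma dirichletForm_nonneg (hA : A ∈ rowStochastic ℝ ι) (hsymm : Aᵀ = A) (f : ι → ℝ) :
    0 ≤ dirichletForm A f := by
  rw [dirichletForm_eq_half_sum hA hsymm]
  exact div_nonneg (sum_nonneg fun x _ => sum_nonneg fun y _ =>
    mul_nonneg (nonneg_of_mem_rowStochastic hA) (sq_nonneg _)) zero_le_two

lemma abs_le_one_of_mulVec_eq_smul (hA : A ∈ rowStochastic ℝ ι) (hsymm : Aᵀ = A)
    {f : ι → ℝ} {μ : ℝ} (hf0 : f ≠ 0) (hf : A *ᵥ f = μ • f) : |μ| ≤ 1 := by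
  have hpos : 0 < f ⬝ᵥ f := by simpa using dotProduct_self_star_pos_iff.2 hf0
  have h := dirichletForm_nonneg (pow_mem hA 2) (by rw [transpose_pow, hsymm]) f
  rw [dirichletForm_eq_of_mulVec_eq_smul (pow_mulVec_eq_of_mulVec_eq_smul hf 2)] at h
  rw [← sq_le_one_iff_abs_le_one]
  nlinarith

end DirichletForm

section RightIncrement

variable {G : Type*} [Group G] [Fintype G]

noncomputable def rightIncrement (f : G → ℝ) (g : G) : EuclideanSpace ℝ G :=
  WithLp.toLp 2 fun x => f x - f (x * g)

variable (f : G → ℝ)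

lemma norm_rightIncrement_sq (g : G) :
    ‖rightIncrement f g‖ ^ 2 = ∑ x, (f x - f (x * g)) ^ 2 := by
  simp [rightIncrement, EuclideanSpace.real_norm_sq_eq]

lemma norm_rightIncrement_mul_le (g h : G) :
    ‖rightIncrement f (g * h)‖ ≤ ‖rightIncrement f g‖ + ‖rightIncrement f h‖ := by
  set v : EuclideanSpace ℝ G := WithLp.toLp 2 fun x => f (x * g) - f (x * g * h)
  have hsplit : rightIncrement f (g * h) = rightIncrement f g + v := by
    ext x; simp [rightIncrement, v, mul_assoc]
  -- `v` is the increment along `h`, read at the translated point `x * g`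
  have hv : ‖v‖ = ‖rightIncrement f h‖ := by
    refine (sq_eq_sq₀ (norm_nonneg _) (norm_nonneg _)).1 ?_
    rw [norm_rightIncrement_sq, EuclideanSpace.real_norm_sq_eq]
    exact Equiv.sum_comp (Equiv.mulRight g) fun x => (f x - f (x * h)) ^ 2
  rw [hsplit, ← hv]
  exact norm_add_le _ _

lemma norm_rightIncrement_list_prod_le {S : Set G} {M : ℝ}
    (hM : ∀ s ∈ S, ‖rightIncrement f s‖ ≤ M) :
    ∀ l : List G, (∀ g ∈ l, g ∈ S) → ‖rightIncrement f l.prod‖ ≤ l.length * M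
  | [], _ => by simp [rightIncrement]; rfl
  | a :: l, hl => by
    have ha := hM a (hl a List.mem_cons_self)
    have ihl := norm_rightIncrement_list_prod_le hM l fun g hg => hl g (List.mem_cons_of_mem a hg)
    calc ‖rightIncrement f (a :: l).prod‖
        ≤ ‖rightIncrement f a‖ + ‖rightIncrement f l.prod‖ := norm_rightIncrement_mul_le f a _
      _ ≤ ((a :: l).length : ℝ) * M := by push_cast [List.length_cons]; linarith

end RightIncrement

section LeftInvariant

variable {G R : Type*} [Group G]

def Matrix.IsLeftInvariant (A : Matrix G G R) : Prop :=
  ∀ g x y, A (g * x) (g * y) = A x y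

variable [Fintype G] [Semiring R] {A B : Matrix G G R}

lemma Matrix.IsLeftInvariant.mul (hA : A.IsLeftInvariant) (hB : B.IsLeftInvariant) :
    (A * B).IsLeftInvariant := fun g x y => by
  simp only [mul_apply]
  rw [← Equiv.sum_comp (Equiv.mulLeft g)]
  simp [hA g, hB g]

lemma Matrix.IsLeftInvariant.pow [DecidableEq G] (hA : A.IsLeftInvariant) (n : ℕ) :
    (A ^ n).IsLeftInvariant := by
  induction n with
  | zero => intro g x y; simp [one_apply]
  | succ n ih => rw [pow_succ]; exact ih.mul hA

lemma Matrix.IsLeftInvariant.sum_mul_sub_sq {A : Matrix G G ℝ} (hA : A.IsLeftInvariant)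
    (f : G → ℝ) :
    ∑ x, ∑ y, A x y * (f x - f y) ^ 2 = ∑ z, A 1 z * ‖rightIncrement f z‖ ^ 2 := by
  have hrow : ∀ x, ∑ y, A x y * (f x - f y) ^ 2 = ∑ z, A 1 z * (f x - f (x * z)) ^ 2 :=
    fun x => by
      rw [← Equiv.sum_comp (Equiv.mulLeft x)]
      simp only [Equiv.coe_mulLeft]
      exact sum_congr rfl fun z _ => by rw [← hA x 1 z, mul_one]
  simp only [hrow, norm_rightIncrement_sq, mul_sum]
  exact sum_comm

end LeftInvariant

section CayleyWalk

variable {G : Type*} [Group G] [DecidableEq G] (S : Finset G)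

noncomputable def cayleyWalk : Matrix G G ℝ := fun x y => (#{s ∈ S | x * s = y} : ℝ) / #S

variable {S}

lemma transpose_cayleyWalk (hsym : ∀ s ∈ S, s⁻¹ ∈ S) : (cayleyWalk S)ᵀ = cayleyWalk S := by
  have hinv : ∀ x y, #{s ∈ S | x * s = y} ≤ #{s ∈ S | y * s = x} := fun x y =>
    card_le_card_of_injOn (·⁻¹) (fun s hs => by
      simp only [mem_coe, mem_filter] at hs ⊢
      exact ⟨hsym s hs.1, by rw [← hs.2, mul_inv_cancel_right]⟩) inv_injective.injOn
  ext x y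
  simp only [transpose_apply, cayleyWalk]
  rw [le_antisymm (hinv y x) (hinv x y)]

lemma isLeftInvariant_cayleyWalk : (cayleyWalk S).IsLeftInvariant := fun g x y => by
  simp only [cayleyWalk, mul_assoc, mul_right_inj]

variable [Fintype G]

lemma cayleyWalk_mulVec (h : G → ℝ) (x : G) :
    (cayleyWalk S *ᵥ h) x = (∑ s ∈ S, h (x * s)) / #S := by
  rw [← sum_fiberwise_of_maps_to (g := (x * ·)) (t := univ) (fun s _ => mem_univ _), sum_div]
  refine sum_congr rfl fun y _ => ?_
  rw [sum_congr rfl fun s hs => by rw [(mem_filter.1 hs).2], sum_const, nsmul_eq_mul]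
  simp only [cayleyWalk]
  ring

lemma cayleyWalk_mem_rowStochastic (hS : S.Nonempty) : cayleyWalk S ∈ rowStochastic ℝ G := by
  refine ⟨fun x y => by unfold cayleyWalk; positivity, funext fun x => ?_⟩
  rw [cayleyWalk_mulVec]
  simp [hS.card_pos.ne']

end CayleyWalk

section WordDist

variable {G : Type*} [Group G]

noncomputable def wordDist (S : Finset G) (x y : G) : ℕ :=
  sInf {k | ∃ l : List G, l.length = k ∧ (∀ g ∈ l, g ∈ S) ∧ x * l.prod = y}

variable {S : Finset G}

lemma exists_list_length_eq_wordDist (hsym : ∀ s ∈ S, s⁻¹ ∈ S)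
    (hgen : Subgroup.closure (S : Set G) = ⊤) (x y : G) :
    ∃ l : List G, l.length = wordDist S x y ∧ (∀ g ∈ l, g ∈ S) ∧ x * l.prod = y := by
  have hmem : x⁻¹ * y ∈ Submonoid.closure ((S : Set G) ∪ (S : Set G)⁻¹) := by
    rw [← Subgroup.closure_toSubmonoid, hgen]; trivial
  obtain ⟨l, hl, hprod⟩ := Submonoid.exists_list_of_mem_closure hmem
  have hlS : ∀ g ∈ l, g ∈ S := fun g hg =>
    (hl g hg).elim id fun h => by simpa using hsym _ (Set.mem_inv.1 h)
  have hne : {k | ∃ l : List G, l.length = k ∧ (∀ g ∈ l, g ∈ S) ∧ x * l.prod = y}.Nonempty :=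
    ⟨l.length, l, rfl, hlS, by rw [hprod, mul_inv_cancel_left]⟩
  exact Nat.sInf_mem hne

variable [Fintype G]

lemma norm_rightIncrement_sq_le (hsym : ∀ s ∈ S, s⁻¹ ∈ S)
    (hgen : Subgroup.closure (S : Set G) = ⊤) (f : G → ℝ) (z : G) :
    ‖rightIncrement f z‖ ^ 2 ≤ wordDist S 1 z ^ 2 * ∑ s ∈ S, ‖rightIncrement f s‖ ^ 2 := by
  set T := ∑ s ∈ S, ‖rightIncrement f s‖ ^ 2
  obtain ⟨l, hlen, hlS, hprod⟩ := exists_list_length_eq_wordDist hsym hgen 1 z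
  have hstep : ∀ s ∈ (S : Set G), ‖rightIncrement f s‖ ≤ √T := fun s hs =>
    Real.le_sqrt_of_sq_le <|
      single_le_sum (f := fun s => ‖rightIncrement f s‖ ^ 2) (fun _ _ => sq_nonneg _) hs
  have hz := norm_rightIncrement_list_prod_le f hstep l hlS
  rw [one_mul] at hprod
  rw [hprod, hlen] at hz
  calc ‖rightIncrement f z‖ ^ 2 ≤ (wordDist S 1 z * √T) ^ 2 :=
        pow_le_pow_left₀ (norm_nonneg _) hz 2
    _ = wordDist S 1 z ^ 2 * T := by
        rw [mul_pow, Real.sq_sqrt (sum_nonneg fun _ _ => sq_nonneg _)]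

end WordDist

section Displacement

variable {G : Type*} [Group G] [Fintype G] [DecidableEq G] {S : Finset G}

lemma dirichletForm_eq_of_isLeftInvariant {A : Matrix G G ℝ} (hA : A ∈ rowStochastic ℝ G)
    (hsymm : Aᵀ = A) (hinv : A.IsLeftInvariant) (f : G → ℝ) :
    dirichletForm A f = (∑ z, A 1 z * ‖rightIncrement f z‖ ^ 2) / 2 := by
  rw [dirichletForm_eq_half_sum hA hsymm, hinv.sum_mul_sub_sq]

lemma dirichletForm_cayleyWalk (hS : S.Nonempty) (hsym : ∀ s ∈ S, s⁻¹ ∈ S) (f : G → ℝ) :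
    dirichletForm (cayleyWalk S) f = (∑ s ∈ S, ‖rightIncrement f s‖ ^ 2) / (2 * #S) := by
  rw [dirichletForm_eq_of_isLeftInvariant (cayleyWalk_mem_rowStochastic hS)
    (transpose_cayleyWalk hsym) isLeftInvariant_cayleyWalk]
  have h := cayleyWalk_mulVec (S := S) (fun z => ‖rightIncrement f z‖ ^ 2) 1
  simp only [one_mul, mulVec, dotProduct] at h
  rw [h, div_div, mul_comm]

lemma dirichletForm_cayleyWalk_pow_le (hS : S.Nonempty) (hsym : ∀ s ∈ S, s⁻¹ ∈ S)
    (hgen : Subgroup.closure (S : Set G) = ⊤) (f : G → ℝ) (n : ℕ) :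
    dirichletForm (cayleyWalk S ^ n) f
      ≤ #S * (∑ z, (cayleyWalk S ^ n) 1 z * (wordDist S 1 z : ℝ) ^ 2)
        * dirichletForm (cayleyWalk S) f := by
  have hwalk := cayleyWalk_mem_rowStochastic hS
  set T := ∑ s ∈ S, ‖rightIncrement f s‖ ^ 2
  rw [dirichletForm_eq_of_isLeftInvariant (pow_mem hwalk n)
    (by rw [transpose_pow, transpose_cayleyWalk hsym]) (isLeftInvariant_cayleyWalk.pow n),
    dirichletForm_cayleyWalk hS hsym]
  calc (∑ z, (cayleyWalk S ^ n) 1 z * ‖rightIncrement f z‖ ^ 2) / 2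
      ≤ (∑ z, (cayleyWalk S ^ n) 1 z * ((wordDist S 1 z : ℝ) ^ 2 * T)) / 2 := by
        gcongr with z
        · exact nonneg_of_mem_rowStochastic (pow_mem hwalk n)
        · exact norm_rightIncrement_sq_le hsym hgen f z
    _ = #S * (∑ z, (cayleyWalk S ^ n) 1 z * (wordDist S 1 z : ℝ) ^ 2) * (T / (2 * #S)) := by
        simp only [← mul_assoc, ← sum_mul]
        field_simp

lemma one_sub_pow_le_of_cayleyWalk_mulVec_eq_smul (hS : S.Nonempty) (hsym : ∀ s ∈ S, s⁻¹ ∈ S)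
    (hgen : Subgroup.closure (S : Set G) = ⊤) {f : G → ℝ} {μ : ℝ} (hf0 : f ≠ 0)
    (hf : cayleyWalk S *ᵥ f = μ • f) (n : ℕ) :
    1 - μ ^ n ≤ #S * (1 - μ) * ∑ z, (cayleyWalk S ^ n) 1 z * (wordDist S 1 z : ℝ) ^ 2 := by
  have hpos : 0 < f ⬝ᵥ f := by simpa using dotProduct_self_star_pos_iff.2 hf0
  have h := dirichletForm_cayleyWalk_pow_le hS hsym hgen f n
  rw [dirichletForm_eq_of_mulVec_eq_smul hf, dirichletForm_eq_of_mulVec_eq_smul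
    (pow_mulVec_eq_of_mulVec_eq_smul hf n)] at h
  refine le_of_mul_le_mul_right ?_ hpos
  linarith

end Displacement

lemma sub_mul_le_geom_sum {μ : ℝ} (hμ : -1 ≤ μ) (n : ℕ) :
    n - (1 - μ) * (n * (n - 1) / 2) ≤ ∑ k ∈ range n, μ ^ k := by
  induction n with
  | zero => simp
  | succ n ih =>
    have hbernoulli := one_add_mul_le_pow (a := μ - 1) (by linarith) n
    rw [add_sub_cancel] at hbernoulli
    rw [sum_range_succ]
    push_cast
    linarith

lemma mul_one_sub_div_two_le_one_sub_pow {μ : ℝ} (hμ : |μ| ≤ 1) {n : ℕ}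
    (hn : n * (1 - μ) ≤ 1) : n * (1 - μ) / 2 ≤ 1 - μ ^ n := by
  obtain ⟨hlo, hhi⟩ := abs_le.1 hμ
  have hgap : 0 ≤ 1 - μ := by linarith
  have hhalf : (n : ℝ) / 2 ≤ ∑ k ∈ range n, μ ^ k := by
    nlinarith [sub_mul_le_geom_sum hlo n, mul_nonneg (sub_nonneg.2 hn) n.cast_nonneg,
      mul_nonneg hgap n.cast_nonneg]
  calc n * (1 - μ) / 2 = n / 2 * (1 - μ) := by ring
    _ ≤ (∑ k ∈ range n, μ ^ k) * (1 - μ) := mul_le_mul_of_nonneg_right hhalf hgap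
    _ = 1 - μ ^ n := geom_sum_mul_neg μ n

lemma exists_pow_le_half {μ : ℝ} (h : μ < 1) : ∃ n : ℕ, μ ^ n ≤ 1 / 2 := by
  rcases le_or_gt μ (1 / 2) with hμ | hμ
  · exact ⟨1, by simpa using hμ⟩
  · obtain ⟨n, hn⟩ := exists_pow_lt_of_lt_one (by norm_num : (0 : ℝ) < 1 / 2) h
    exact ⟨n, hn.le⟩

theorem cayley_displacement_and_relaxation_general {G : Type*} [Group G] [Fintype G] [DecidableEq G]
    (S : Finset G) (hS : S.Nonempty) (hsym : ∀ s ∈ S, s⁻¹ ∈ S)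
    (hgen : Subgroup.closure (S : Set G) = ⊤)
    (P : Matrix G G ℝ)
    (hP : ∀ x y, P x y = ((S.filter fun s => x * s = y).card : ℝ) / S.card)
    (dist : G → G → ℕ)
    (hdist : ∀ x y, dist x y
      = sInf {k | ∃ l : List G, l.length = k ∧ (∀ g ∈ l, g ∈ S) ∧ x * l.prod = y})
    (lam : ℝ) (heig : ∃ f : G → ℝ, f ≠ 0 ∧ P.mulVec f = lam • f) (hlam1 : lam ≠ 1) :
    (∀ n : ℕ, (n : ℝ) ≤ 1 / (1 - lam) →
      (n : ℝ) / (2 * S.card) ≤ ∑ y : G, (P ^ n) 1 y * ((dist 1 y : ℝ)) ^ 2) ∧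
    1 / (1 - lam)
      ≤ 2 * S.card * ((Finset.univ.sup fun p : G × G => dist p.1 p.2 : ℕ) : ℝ) ^ 2 := by
  obtain rfl : P = cayleyWalk S := Matrix.ext hP
  obtain rfl : dist = wordDist S := funext₂ hdist
  obtain ⟨f, hf0, hf⟩ := heig
  have hwalk := cayleyWalk_mem_rowStochastic hS
  have hlam : |lam| ≤ 1 := abs_le_one_of_mulVec_eq_smul hwalk (transpose_cayleyWalk hsym) hf0 hf
  have hgap : 0 < 1 - lam := sub_pos.2 ((abs_le.1 hlam).2.lt_of_ne hlam1)
  have hdisp := one_sub_pow_le_of_cayleyWalk_mulVec_eq_smul hS hsym hgen hf0 hf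
  have hS' : (0 : ℝ) < #S := by exact_mod_cast hS.card_pos
  refine ⟨fun n hn => ?_, ?_⟩
  · have h := (mul_one_sub_div_two_le_one_sub_pow hlam ((le_div_iff₀ hgap).1 hn)).trans (hdisp n)
    rw [div_le_iff₀ (by positivity)]
    nlinarith
  · obtain ⟨n, hn⟩ := exists_pow_le_half (sub_pos.1 hgap)
    have hdiam : ∑ z, (cayleyWalk S ^ n) 1 z * (wordDist S 1 z : ℝ) ^ 2
        ≤ ((univ.sup fun p : G × G => wordDist S p.1 p.2 : ℕ) : ℝ) ^ 2 :=
      sum_mul_le_of_mem_rowStochastic (pow_mem hwalk n) (fun z => by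
        gcongr; exact le_sup (f := fun p : G × G => wordDist S p.1 p.2) (mem_univ (1, z))) 1
    have h := (hdisp n).trans (mul_le_mul_of_nonneg_left hdiam (mul_pos hS' hgap).le)
    rw [div_le_iff₀ hgap]
    linarith

/-- For simple random walk on a finite Cayley graph of a group `G` with symmetric generating
set `S` of size `d`, if `λ` is the second largest eigenvalue of the transition matrix `P` and
`n ≤ 1/(1−λ)`, then `E[ρ(X_0, X_n)²] ≥ n/(2d)` (starting from the identity, by transitivity),
where `ρ` is the graph distance. Consequently the relaxation time satisfies
`t_rel = 1/(1−λ) ≤ 2 d · diam(G)²`. -/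
theorem cayley_displacement_and_relaxation {G : Type*} [Group G] [Fintype G] [DecidableEq G]
    (S : Finset G) (hS : S.Nonempty) (hsym : ∀ s ∈ S, s⁻¹ ∈ S)
    (hgen : Subgroup.closure (S : Set G) = ⊤)
    (P : Matrix G G ℝ)
    (hP : ∀ x y, P x y = ((S.filter fun s => x * s = y).card : ℝ) / S.card)
    (dist : G → G → ℕ)
    (hdist : ∀ x y, dist x y
      = sInf {k | ∃ l : List G, l.length = k ∧ (∀ g ∈ l, g ∈ S) ∧ x * l.prod = y})
    (lam : ℝ) (heig : ∃ f : G → ℝ, f ≠ 0 ∧ P.mulVec f = lam • f) (hlam1 : lam ≠ 1)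
    (hsecond : ∀ mu : ℝ, (∃ f : G → ℝ, f ≠ 0 ∧ P.mulVec f = mu • f) → mu = 1 ∨ mu ≤ lam) :
    (∀ n : ℕ, (n : ℝ) ≤ 1 / (1 - lam) →
      (n : ℝ) / (2 * S.card) ≤ ∑ y : G, (P ^ n) 1 y * ((dist 1 y : ℝ)) ^ 2) ∧
    1 / (1 - lam)
      ≤ 2 * S.card * ((Finset.univ.sup fun p : G × G => dist p.1 p.2 : ℕ) : ℝ) ^ 2 :=
  cayley_displacement_and_relaxation_general S hS hsym hgen P hP dist hdist lam heig hlam1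
end
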